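/- arXiv:2109.05447 — 11 statements merged into one kernel-verified Lean document; each statement's English description precedes it below -/
import Mathlib

section
/- Gauss' Test (convergence part): Let (a_n) be positive with a_{n+1}/a_n = 1 - β/n + γ(n)/n^{1+λ} for all n ≥ 1, where λ > 0, β > 1 is constant, and γ is a bounded sequence. Then ∑ a_n converges. -/
/-!
Choose `1 < r < β`. Since `γ` is bounded, the ratio `a (n + 1) / a n` is eventually at most
`1 - r / n`, which by Bernoulli's inequality is at most `(n / (n + 1)) ^ r`. Hence `a n * n ^ r` is
eventually nonincreasing, so `a n = O(n ^ (-r))` and `∑ a n` converges by comparison with a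
`p`-series (Raabe's test).
-/

open Filter Topology

theorem one_sub_div_add_one_le_div_add_one_rpow {x r : ℝ} (hx : 0 ≤ x) (hr : 1 ≤ r) :
    1 - r / (x + 1) ≤ (x / (x + 1)) ^ r := by
  have hs : -1 ≤ -(1 / (x + 1)) := by
    rw [neg_le_neg_iff, div_le_one (by positivity)]
    linarith
  have hx1 : x / (x + 1) = 1 + -(1 / (x + 1)) := by field_simp; ring
  calc 1 - r / (x + 1) = 1 + r * -(1 / (x + 1)) := by ring
    _ ≤ (1 + -(1 / (x + 1))) ^ r := one_add_mul_self_le_rpow_one_add hs hr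
    _ = (x / (x + 1)) ^ r := by rw [hx1]

theorem mul_add_one_rpow_le_mul_rpow_of_div_le {p q x r : ℝ} (hp : 0 < p) (hx : 0 < x)
    (hr : 1 ≤ r) (h : q / p ≤ 1 - r / x) : q * (x + 1) ^ r ≤ p * x ^ r := by
  have hratio : q / p ≤ x ^ r / (x + 1) ^ r :=
    calc q / p ≤ 1 - r / x := h
      _ ≤ 1 - r / (x + 1) := by
        gcongr 1 - ?_
        exact div_le_div_of_nonneg_left (by linarith) hx (by linarith)
      _ ≤ (x / (x + 1)) ^ r := one_sub_div_add_one_le_div_add_one_rpow hx.le hr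
      _ = x ^ r / (x + 1) ^ r := Real.div_rpow hx.le (by linarith) r
  rw [div_le_div_iff₀ hp (by positivity)] at hratio
  linarith

/-- Raabe's test. -/
theorem summable_of_eventually_div_le_one_sub_div {a : ℕ → ℝ} {r : ℝ} (ha : ∀ n, 0 < a n)
    (hr : 1 < r) (h : ∀ᶠ n : ℕ in atTop, a (n + 1) / a n ≤ 1 - r / n) : Summable a := by
  obtain ⟨N, hN⟩ := (h.and (eventually_gt_atTop 0)).exists_forall_of_atTop
  have hstep : ∀ n ≥ N, a (n + 1) * ((n + 1 : ℕ) : ℝ) ^ r ≤ a n * (n : ℝ) ^ r := fun n hn => by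
    push_cast
    exact mul_add_one_rpow_le_mul_rpow_of_div_le (ha n) (by exact_mod_cast (hN n hn).2) hr.le
      (hN n hn).1
  have hbound : ∀ n ≥ N, a n * (n : ℝ) ^ r ≤ a N * (N : ℝ) ^ r := fun n hn =>
    antitoneOn_nat_Ici_of_succ_le (f := fun n : ℕ => a n * (n : ℝ) ^ r) hstep (le_refl N) hn hn
  refine .of_norm_bounded_eventually_nat
    ((Real.summable_nat_rpow_inv.mpr hr).mul_left (a N * (N : ℝ) ^ r)) ?_
  filter_upwards [eventually_ge_atTop N, eventually_gt_atTop 0] with n hn hn0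
  rw [Real.norm_of_nonneg (ha n).le, ← div_eq_mul_inv, le_div_iff₀ (by positivity)]
  exact hbound n hn

theorem eventually_one_sub_div_add_div_rpow_le {β r lam C : ℝ} {γ : ℕ → ℝ} (hlam : 0 < lam)
    (hr : r < β) (hγ : ∀ n, γ n ≤ C) :
    ∀ᶠ n : ℕ in atTop, 1 - β / n + γ n / (n : ℝ) ^ (1 + lam) ≤ 1 - r / n := by
  have htend : Tendsto (fun n : ℕ => (β - r) * (n : ℝ) ^ lam) atTop atTop :=
    ((tendsto_rpow_atTop hlam).comp tendsto_natCast_atTop_atTop).const_mul_atTop (by linarith)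
  filter_upwards [htend.eventually_ge_atTop C, eventually_gt_atTop 0] with n hC hn
  have hn : (0 : ℝ) < n := by exact_mod_cast hn
  have hγn : γ n / (n : ℝ) ^ (1 + lam) ≤ (β - r) / n := by
    rw [Real.rpow_add hn, Real.rpow_one, div_le_div_iff₀ (by positivity) hn]
    nlinarith [hγ n]
  calc 1 - β / n + γ n / (n : ℝ) ^ (1 + lam) ≤ 1 - β / n + (β - r) / n := by linarith
    _ = 1 - r / n := by ring

theorem gauss_test_convergence (a : ℕ → ℝ) (ha : ∀ n, 0 < a n)
    (lam β : ℝ) (hlam : 0 < lam) (hβ : 1 < β) (γ : ℕ → ℝ)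
    (hγ : ∃ C : ℝ, ∀ n, |γ n| ≤ C)
    (hratio : ∀ n : ℕ, 1 ≤ n →
      a (n + 1) / a n = 1 - β / n + γ n / (n : ℝ) ^ (1 + lam)) :
    Summable a := by
  obtain ⟨C, hC⟩ := hγ
  have hratio_le := eventually_one_sub_div_add_div_rpow_le hlam
    (show (1 + β) / 2 < β by linarith) fun n => (abs_le.mp (hC n)).2
  refine summable_of_eventually_div_le_one_sub_div ha (show 1 < (1 + β) / 2 by linarith) ?_
  filter_upwards [hratio_le, eventually_ge_atTop 1] with n hle hn
  rwa [hratio n hn]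
end

section
/- Gauss' Test (divergence part): Let (a_n) be positive with a_{n+1}/a_n = 1 - β/n + γ(n)/n^{1+λ} for all n ≥ 1, where λ > 0, β ≤ 1 is constant, and γ is bounded. Then ∑ a_n diverges. -/
/-! Put `b n = n * a n`. The ratio condition with `β ≤ 1` gives
`b (n + 1) ≥ b n * (1 - x n)` with `x n = 1 / n ^ 2 + 2 C / n ^ (1 + λ)` summable. Since
`1 - x ≥ exp (-2 x)` for small `x`, the sequence `b` stays above `b N * exp (-2 ∑ x) > 0`, so
`a n` eventually dominates a multiple of the harmonic series. -/

open Filter Topology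

lemma Real.exp_neg_two_mul_le_one_sub {x : ℝ} (hx0 : 0 ≤ x) (hx : x ≤ 1 / 2) :
    Real.exp (-(2 * x)) ≤ 1 - x := by
  have h : 1 ≤ (1 - x) * Real.exp (2 * x) := by
    nlinarith [Real.add_one_le_exp (2 * x), Real.exp_pos (2 * x)]
  rw [Real.exp_neg, inv_le_iff_one_le_mul₀ (Real.exp_pos _)]
  linarith

lemma exists_pos_eventually_le_of_mul_one_sub_le {b x : ℕ → ℝ} (hx0 : ∀ n, 0 ≤ x n)
    (hx : Summable x) (hb : ∀ᶠ n in atTop, 0 < b n)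
    (hstep : ∀ᶠ n in atTop, b n * (1 - x n) ≤ b (n + 1)) :
    ∃ c > 0, ∀ᶠ n in atTop, c ≤ b n := by
  have hsmall : ∀ᶠ n in atTop, x n ≤ 1 / 2 :=
    hx.tendsto_atTop_zero.eventually (ge_mem_nhds (by norm_num))
  obtain ⟨N, hN⟩ := eventually_atTop.mp (hb.and (hsmall.and hstep))
  have hprod : ∀ n, N ≤ n →
      b N * Real.exp (-(2 * ∑ k ∈ Finset.Ico N n, x k)) ≤ b n := by
    refine Nat.le_induction (by simp) fun n hn ih => ?_
    obtain ⟨hbn, hxn, hstepn⟩ := hN n hn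
    calc b N * Real.exp (-(2 * ∑ k ∈ Finset.Ico N (n + 1), x k))
        = b N * Real.exp (-(2 * ∑ k ∈ Finset.Ico N n, x k)) * Real.exp (-(2 * x n)) := by
          rw [Finset.sum_Ico_succ_top hn, mul_assoc, ← Real.exp_add]
          ring_nf
      _ ≤ b n * (1 - x n) :=
          mul_le_mul ih (Real.exp_neg_two_mul_le_one_sub (hx0 n) hxn) (Real.exp_pos _).le hbn.le
      _ ≤ b (n + 1) := hstepn
  refine ⟨b N * Real.exp (-(2 * ∑' k, x k)), mul_pos (hN N le_rfl).1 (Real.exp_pos _),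
    eventually_atTop.mpr ⟨N, fun n hn => le_trans ?_ (hprod n hn)⟩⟩
  gcongr
  · exact (hN N le_rfl).1.le
  · exact hx.sum_le_tsum _ fun k _ => hx0 k

lemma not_summable_of_eventually_div_natCast_le {a : ℕ → ℝ} {c : ℝ} (hc : 0 < c)
    (ha : ∀ᶠ n in atTop, c / n ≤ a n) : ¬ Summable a := by
  intro hsum
  have hharm : Summable fun n : ℕ => c / n :=
    hsum.of_norm_bounded_eventually_nat <| ha.mono fun n hn => by
      rwa [Real.norm_of_nonneg (by positivity)]
  refine Real.not_summable_one_div_natCast ((hharm.mul_left c⁻¹).congr fun n => ?_)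
  rw [← mul_div_assoc, inv_mul_cancel₀ hc.ne']

lemma mul_one_sub_le_succ_mul {n β r t : ℝ} (hn : 1 ≤ n) (hβ : β ≤ 1) (ht : 0 ≤ t)
    (hr : 1 - β / n - t ≤ r) :
    n * (1 - (1 / n ^ 2 + 2 * t)) ≤ (n + 1) * r := by
  have hβn : β / n ≤ 1 / n := by gcongr
  calc n * (1 - (1 / n ^ 2 + 2 * t)) ≤ (n + 1) * (1 - 1 / n - t) := by
        field_simp
        nlinarith [mul_nonneg (mul_nonneg ht (by linarith : 0 ≤ n)) (by linarith : 0 ≤ n - 1)]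
    _ ≤ (n + 1) * r := by gcongr; linarith

theorem gauss_test_divergence (a : ℕ → ℝ) (ha : ∀ n, 0 < a n)
    (lam β : ℝ) (hlam : 0 < lam) (hβ : β ≤ 1) (γ : ℕ → ℝ)
    (hγ : ∃ C : ℝ, ∀ n, |γ n| ≤ C)
    (hratio : ∀ n : ℕ, 1 ≤ n →
      a (n + 1) / a n = 1 - β / n + γ n / (n : ℝ) ^ (1 + lam)) :
    ¬ Summable a := by
  obtain ⟨C, hC⟩ := hγ
  have hC0 : 0 ≤ C := (abs_nonneg _).trans (hC 0)
  set x : ℕ → ℝ := fun n => 1 / (n : ℝ) ^ 2 + 2 * (C / (n : ℝ) ^ (1 + lam))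
  have hrpow : Summable fun n : ℕ => 2 * (C / (n : ℝ) ^ (1 + lam)) := by
    simpa only [mul_one_div] using
      ((Real.summable_one_div_nat_rpow (p := 1 + lam)).mpr (by linarith)).mul_left C |>.mul_left 2
  have hx : Summable x := (Real.summable_one_div_nat_pow.mpr one_lt_two).add hrpow
  have hstep : ∀ᶠ n in atTop, (n * a n) * (1 - x n) ≤ ((n + 1 : ℕ) : ℝ) * a (n + 1) := by
    filter_upwards [eventually_ge_atTop 1] with n hn
    have hn' : (1 : ℝ) ≤ n := by exact_mod_cast hn
    have hγn : -(C / (n : ℝ) ^ (1 + lam)) ≤ γ n / (n : ℝ) ^ (1 + lam) := by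
      rw [← neg_div]; gcongr; exact neg_le_of_abs_le (hC n)
    have hfactor : (n : ℝ) * (1 - x n) ≤ (n + 1) * (a (n + 1) / a n) :=
      mul_one_sub_le_succ_mul hn' hβ (by positivity) (by rw [hratio n hn]; linarith)
    calc n * a n * (1 - x n) = a n * (n * (1 - x n)) := by ring
      _ ≤ a n * ((n + 1) * (a (n + 1) / a n)) := mul_le_mul_of_nonneg_left hfactor (ha n).le
      _ = ((n + 1 : ℕ) : ℝ) * a (n + 1) := by
          push_cast
          field_simp [(ha n).ne']
  obtain ⟨c, hc, hcb⟩ := exists_pos_eventually_le_of_mul_one_sub_le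
    (fun n => by dsimp only [x]; positivity) hx (eventually_ge_atTop 1 |>.mono fun n hn =>
      mul_pos (Nat.cast_pos.mpr hn) (ha n)) hstep
  refine not_summable_of_eventually_div_natCast_le hc ?_
  filter_upwards [hcb, eventually_ge_atTop 1] with n hcn hn
  rw [div_le_iff₀ (by exact_mod_cast hn)]
  linarith [mul_comm (n : ℝ) (a n)]
end

section
/- Kummer's Test (convergence part): Let (a_n) be positive. If there exists a sequence of positive reals (p_n) and r > 0 such that p_n · (a_n / a_{n+1}) - p_{n+1} > r for all sufficiently large n, then ∑ a_n converges. -/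
open Filter Topology

theorem kummer_test_convergence (a p : ℕ → ℝ) (ha : ∀ n, 0 < a n)
    (hp : ∀ n, 0 < p n) (r : ℝ) (hr : 0 < r)
    (h : ∃ N : ℕ, ∀ n ≥ N, p n * (a n / a (n + 1)) - p (n + 1) > r) :
    Summable a := by
  obtain ⟨N, hN⟩ := h
  -- key: for n ≥ N, r * a (n+1) ≤ p n * a n - p (n+1) * a (n+1)
  have key : ∀ n ≥ N, r * a (n + 1) ≤ p n * a n - p (n + 1) * a (n + 1) := by
    intro n hn
    have h1 := hN n hn
    have h2 := (ha (n + 1))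
    have h3 : a n / a (n + 1) * a (n + 1) = a n := div_mul_cancel₀ _ h2.ne'
    have h4 := mul_lt_mul_of_pos_right h1 h2
    rw [sub_mul, mul_assoc, h3] at h4
    linarith
  rw [← summable_nat_add_iff (N + 1)]
  apply summable_of_sum_range_le (c := p N * a N / r)
    (fun n => (ha _).le)
  intro n
  have tel : ∑ i ∈ Finset.range n, r * a (i + (N + 1)) ≤ p N * a N - p (n + N) * a (n + N) := by
    induction n with
    | zero => simp
    | succ m ih =>
      rw [Finset.sum_range_succ]
      have hk := key (m + N) (Nat.le_add_left N m)
      have : m + (N + 1) = m + N + 1 := by ring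
      rw [this]
      have : m + 1 + N = m + N + 1 := by ring
      rw [this]
      linarith
  have hb : ∑ i ∈ Finset.range n, r * a (i + (N + 1)) ≤ p N * a N := by
    have := mul_pos (hp (n + N)) (ha (n + N))
    linarith
  rw [← Finset.mul_sum] at hb
  rw [le_div_iff₀ hr]
  linarith
end

section
/- Kummer's Test (divergence part): Let (a_n) be positive. If there exists a sequence of positive reals (p_n) with ∑ 1/p_n divergent, and p_n · (a_n / a_{n+1}) - p_{n+1} < 0 for all sufficiently large n, then ∑ a_n diverges. -/
open Filter Topology

theorem kummer_test_divergence (a p : ℕ → ℝ) (ha : ∀ n, 0 < a n)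
    (hp : ∀ n, 0 < p n) (hdiv : ¬ Summable (fun n => 1 / p n))
    (h : ∃ N : ℕ, ∀ n ≥ N, p n * (a n / a (n + 1)) < p (n + 1)) :
    ¬ Summable a := by
  obtain ⟨N, hN⟩ := h
  intro hsum
  have hc : 0 < p N * a N := mul_pos (hp N) (ha N)
  have key : ∀ n, p N * a N ≤ p (n + N) * a (n + N) := by
    intro n
    induction n with
    | zero => simp
    | succ k ih =>
      have hstep := hN (k + N) (Nat.le_add_left N k)
      have : p (k + N) * a (k + N) < p (k + N + 1) * a (k + N + 1) := by
        have h1 : 0 < a (k + N + 1) := ha _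
        have := mul_lt_mul_of_pos_right hstep h1
        calc p (k + N) * a (k + N)
            = p (k + N) * (a (k + N) / a (k + N + 1)) * a (k + N + 1) := by
              rw [mul_assoc, div_mul_cancel₀ _ (ne_of_gt h1)]
          _ < p (k + N + 1) * a (k + N + 1) := this
      have heq : k + 1 + N = k + N + 1 := by ring
      rw [heq]
      linarith
  have hs2 : Summable (fun n => a (n + N) / (p N * a N)) :=
    ((summable_nat_add_iff N).2 hsum).div_const _
  have hs3 : Summable (fun n => 1 / p (n + N)) := by
    apply Summable.of_nonneg_of_le (fun n => one_div_nonneg.2 (hp _).le) (fun n => ?_) hs2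
    have hk := key n
    rw [div_le_div_iff₀ (hp _) hc, one_mul]
    calc p N * a N ≤ p (n + N) * a (n + N) := hk
      _ = a (n + N) * p (n + N) := by ring
  exact hdiv ((summable_nat_add_iff N).1 hs3)
end

section
/- Second Ratio Comparison Test (convergence part): Let (a_n) and (b_n) be sequences of positive reals such that for all sufficiently large n, a_{2n}/a_n ≤ b_{2n}/b_n and a_{2n+1}/a_n ≤ b_{2n+1}/b_n. If ∑ b_n converges then ∑ a_n converges. -/
open Filter Topology

theorem second_ratio_comparison_convergence (a b : ℕ → ℝ)
    (ha : ∀ n, 1 ≤ n → 0 < a n) (hb : ∀ n, 1 ≤ n → 0 < b n)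
    (h : ∃ N : ℕ, ∀ n ≥ N,
      a (2 * n) / a n ≤ b (2 * n) / b n ∧
      a (2 * n + 1) / a n ≤ b (2 * n + 1) / b n)
    (hbsum : Summable b) : Summable a := by
  obtain ⟨N, hN⟩ := h
  set N₀ := max N 1 with hN₀
  have hN₀1 : 1 ≤ N₀ := le_max_right _ _
  have hne : (Finset.Icc N₀ (2 * N₀ - 1)).Nonempty :=
    ⟨N₀, Finset.mem_Icc.mpr ⟨le_rfl, by omega⟩⟩
  set C := (Finset.Icc N₀ (2 * N₀ - 1)).sup' hne (fun k => a k / b k) with hC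
  have key : ∀ n, N₀ ≤ n → a n / b n ≤ C := by
    intro n
    induction n using Nat.strong_induction_on with
    | _ n ih =>
      intro hn
      by_cases hlt : n < 2 * N₀
      · exact Finset.le_sup' (fun k => a k / b k) (Finset.mem_Icc.mpr ⟨hn, by omega⟩)
      · push_neg at hlt
        obtain ⟨m, hm⟩ : ∃ m, n = 2 * m ∨ n = 2 * m + 1 := ⟨n / 2, by omega⟩
        have hmN : N ≤ m := by omega
        have hm1 : 1 ≤ m := by omega
        have hn1 : 1 ≤ n := by omega
        have h1 : a n / a m ≤ b n / b m := by
          rcases hm with rfl | rfl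
          · exact (hN m hmN).1
          · exact (hN m hmN).2
        have h2 : a n / b n ≤ a m / b m := by
          rw [div_le_div_iff₀ (hb n hn1) (hb m hm1)]
          have := (div_le_div_iff₀ (ha m hm1) (hb m hm1)).mp h1
          nlinarith
        exact h2.trans (ih m (by omega) (by omega))
  have hle : ∀ n, N₀ ≤ n → a n ≤ C * b n := fun n hn =>
    (div_le_iff₀ (hb n (by omega))).mp (key n hn)
  rw [← summable_nat_add_iff N₀]
  apply Summable.of_nonneg_of_le
    (fun n => (ha (n + N₀) (by omega)).le)
    (fun n => hle (n + N₀) (by omega))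
  exact (((summable_nat_add_iff N₀).mpr hbsum).mul_left C)
end

section
/- Second Ratio Comparison Test (divergence part): Let (a_n) and (b_n) be sequences of positive reals such that for all sufficiently large n, a_{2n}/a_n ≤ b_{2n}/b_n and a_{2n+1}/a_n ≤ b_{2n+1}/b_n. If ∑ a_n diverges then ∑ b_n diverges. -/
open Filter Topology

theorem second_ratio_comparison_divergence (a b : ℕ → ℝ)
    (ha : ∀ n, 1 ≤ n → 0 < a n) (hb : ∀ n, 1 ≤ n → 0 < b n)
    (h : ∃ N : ℕ, ∀ n ≥ N,
      a (2 * n) / a n ≤ b (2 * n) / b n ∧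
      a (2 * n + 1) / a n ≤ b (2 * n + 1) / b n)
    (hadiv : ¬ Summable a) : ¬ Summable b := by
  obtain ⟨N, hN⟩ := h
  intro hbsum
  apply hadiv
  set M0 : ℕ := max N 1 with hM0
  have hM0ge1 : 1 ≤ M0 := le_max_right _ _
  have hM0geN : N ≤ M0 := le_max_left _ _
  have hne : (Finset.Ico M0 (2 * M0)).Nonempty := by
    refine ⟨M0, Finset.mem_Ico.mpr ⟨le_refl _, ?_⟩⟩
    omega
  set M : ℝ := (Finset.Ico M0 (2 * M0)).sup' hne (fun k => a k / b k) with hM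
  -- key claim
  have key : ∀ n, M0 ≤ n → a n ≤ M * b n := by
    intro n
    induction n using Nat.strong_induction_on with
    | _ n ih =>
      intro hn
      by_cases hlt : n < 2 * M0
      · have hmem : n ∈ Finset.Ico M0 (2 * M0) := Finset.mem_Ico.mpr ⟨hn, hlt⟩
        have hle : a n / b n ≤ M := Finset.le_sup' (fun k => a k / b k) hmem
        have hbn : 0 < b n := hb n (le_trans hM0ge1 hn)
        calc a n = (a n / b n) * b n := by field_simp
        _ ≤ M * b n := by nlinarith
      · push_neg at hlt
        set m : ℕ := n / 2 with hm
        have hmM0 : M0 ≤ m := by omega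
        have hmlt : m < n := by omega
        have hmN : N ≤ m := le_trans hM0geN hmM0
        have ham : 0 < a m := ha m (le_trans hM0ge1 hmM0)
        have hbm : 0 < b m := hb m (le_trans hM0ge1 hmM0)
        have hbn : 0 < b n := hb n (le_trans hM0ge1 hn)
        have ihm : a m ≤ M * b m := ih m hmlt hmM0
        have hratio : a n / a m ≤ b n / b m := by
          rcases Nat.even_or_odd n with he | ho
          · obtain ⟨k, hk⟩ := he
            have : n = 2 * m := by omega
            rw [this]; exact (hN m hmN).1
          · obtain ⟨k, hk⟩ := ho
            have : n = 2 * m + 1 := by omega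
            rw [this]; exact (hN m hmN).2
        have h1 : a n * b m ≤ b n * a m := by
          rw [div_le_div_iff₀ ham hbm] at hratio
          linarith
        nlinarith
  -- comparison
  have hsum : Summable (fun n => a (n + M0)) := by
    apply Summable.of_nonneg_of_le
      (fun n => le_of_lt (ha (n + M0) (by omega)))
      (fun n => key (n + M0) (by omega))
    exact (hbsum.comp_injective (add_left_injective M0)).mul_left M
  exact (summable_nat_add_iff M0).mp hsum
end

section
/- Second Ratio Test (divergence part): Let (a_n) be a sequence of positive reals. If min(liminf a_{2n}/a_n, liminf a_{2n+1}/a_n) > 1/2, then ∑ a_n diverges. -/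
/-!
Eventually both `a (2n)` and `a (2n+1)` exceed `a n / 2`, so `a n < a (2n) + a (2n+1)`.
Summing this over `n ∈ [x, 2x)` shows that the dyadic block sums `∑_{x ≤ n < 2x} a n` do not
decrease along `x, 2x, 4x, …` once `x` is large. For a summable series these blocks tend to `0`,
while the first of them is positive.
-/

open Filter Topology Finset

theorem Finset.sum_range_two_mul {M : Type*} [AddCommMonoid M] (f : ℕ → M) (t : ℕ) :
    ∑ n ∈ range (2 * t), f n = ∑ n ∈ range t, (f (2 * n) + f (2 * n + 1)) := by
  induction t with
  | zero => simp
  | succ t ih => rw [Nat.mul_succ, sum_range_succ, sum_range_succ, sum_range_succ, ih, add_assoc]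

theorem Finset.sum_Ico_two_mul {M : Type*} [AddCommMonoid M] (f : ℕ → M) (s t : ℕ) :
    ∑ n ∈ Ico (2 * s) (2 * t), f n = ∑ n ∈ Ico s t, (f (2 * n) + f (2 * n + 1)) := by
  rw [sum_Ico_eq_sum_range, sum_Ico_eq_sum_range, ← Nat.mul_sub, sum_range_two_mul]
  simp only [mul_add, add_assoc]

theorem Real.eventually_lt_of_lt_liminf {α : Type*} {l : Filter α} {u : α → ℝ} {b : ℝ}
    (hb : 0 ≤ b) (h : b < liminf u l) : ∀ᶠ x in l, b < u x := by
  by_cases hu : l.IsBoundedUnder (· ≥ ·) u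
  · exact Filter.eventually_lt_of_lt_liminf h hu
  · rw [Real.liminf_of_not_isBoundedUnder hu] at h
    exact absurd h hb.not_gt

def dyadicBlockSum {M : Type*} [AddCommMonoid M] (f : ℕ → M) (x : ℕ) : M :=
  ∑ n ∈ Ico x (2 * x), f n

section Monotone

variable {M : Type*} [AddCommMonoid M] [PartialOrder M] [IsOrderedAddMonoid M]
  {f : ℕ → M} {N : ℕ}

theorem dyadicBlockSum_le_two_mul (h : ∀ n ≥ N, f n ≤ f (2 * n) + f (2 * n + 1)) {x : ℕ}
    (hx : N ≤ x) : dyadicBlockSum f x ≤ dyadicBlockSum f (2 * x) := by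
  rw [dyadicBlockSum, dyadicBlockSum, sum_Ico_two_mul]
  exact sum_le_sum fun n hn => h n (hx.trans (mem_Ico.1 hn).1)

theorem monotone_dyadicBlockSum_pow_mul (h : ∀ n ≥ N, f n ≤ f (2 * n) + f (2 * n + 1)) :
    Monotone fun k => dyadicBlockSum f (2 ^ k * N) := by
  refine monotone_nat_of_le_succ fun k => ?_
  rw [pow_succ', mul_assoc]
  exact dyadicBlockSum_le_two_mul h (Nat.le_mul_of_pos_left N (by positivity))

end Monotone

theorem Summable.tendsto_dyadicBlockSum_zero {G : Type*} [AddCommGroup G] [TopologicalSpace G]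
    [IsTopologicalAddGroup G] {f : ℕ → G} (hf : Summable f) :
    Tendsto (dyadicBlockSum f) atTop (𝓝 0) := by
  have hpartial := hf.tendsto_sum_tsum_nat
  have hdouble : Tendsto (fun x => ∑ n ∈ range (2 * x), f n) atTop (𝓝 (∑' n, f n)) :=
    hpartial.comp (tendsto_id.const_mul_atTop' two_pos)
  have hblock : dyadicBlockSum f = fun x => ∑ n ∈ range (2 * x), f n - ∑ n ∈ range x, f n :=
    funext fun x => sum_Ico_eq_sub _ (Nat.le_mul_of_pos_left _ two_pos)
  simpa [hblock] using hdouble.sub hpartial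

theorem second_ratio_test_divergence (a : ℕ → ℝ)
    (ha : ∀ n, 1 ≤ n → 0 < a n)
    (h1 : 1 / 2 < Filter.liminf (fun n => a (2 * n) / a n) Filter.atTop)
    (h2 : 1 / 2 < Filter.liminf (fun n => a (2 * n + 1) / a n) Filter.atTop) :
    ¬ Summable a := by
  intro hs
  have hpair : ∀ᶠ n in atTop, a n < a (2 * n) + a (2 * n + 1) := by
    filter_upwards [Real.eventually_lt_of_lt_liminf (by norm_num) h1,
      Real.eventually_lt_of_lt_liminf (by norm_num) h2, eventually_ge_atTop 1] with n hn1 hn2 hn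
    rw [lt_div_iff₀ (ha n hn)] at hn1 hn2
    linarith
  obtain ⟨N, hN⟩ := eventually_atTop.1 (hpair.and (eventually_ge_atTop 1))
  have hN1 : 1 ≤ N := (hN N le_rfl).2
  have hmono := monotone_dyadicBlockSum_pow_mul fun n hn => (hN n hn).1.le
  have hblocks : Tendsto (fun k => dyadicBlockSum a (2 ^ k * N)) atTop (𝓝 0) :=
    hs.tendsto_dyadicBlockSum_zero.comp <| tendsto_atTop_mono
      (fun k => Nat.lt_two_pow_self.le.trans (Nat.le_mul_of_pos_right _ hN1))
      tendsto_id
  have hpos : 0 < dyadicBlockSum a N :=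
    sum_pos (fun n hn => ha n (hN1.trans (mem_Ico.1 hn).1))
      (nonempty_Ico.2 (by omega))
  exact hpos.not_ge (by simpa using hmono.ge_of_tendsto hblocks 0)
end

section
/- For any real p, the limit as n → ∞ of ln(n) · (1/2 − (ln n)^p / (2 (ln 2n)^p)) equals (p ln 2)/2. -/
open Filter Topology

/-! With `x = log n` and `c = log 2` we have `log (2n) = x + c`, so the sequence equals
`-(x / 2) * ((1 + c / x) ^ (-p) - 1)`. For any exponent `a`, `x * ((1 + c / x) ^ a - 1)` is `c`
times a difference quotient of `t ↦ t ^ a` at `1` with step `c / x → 0`, hence tends to `a * c`. -/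

lemma tendsto_mul_one_add_div_rpow_sub_one (a c : ℝ) :
    Tendsto (fun x : ℝ => x * ((1 + c / x) ^ a - 1)) atTop (𝓝 (a * c)) := by
  rcases eq_or_ne c 0 with rfl | hc
  · simp
  have hslope : Tendsto (fun t : ℝ => t⁻¹ • ((1 + t) ^ a - 1 ^ a)) (𝓝[≠] 0)
      (𝓝 (a * 1 ^ (a - 1))) :=
    (Real.hasDerivAt_rpow_const (x := 1) (Or.inl one_ne_zero)).tendsto_slope_zero
  have hdiv : Tendsto (fun x : ℝ => c / x) atTop (𝓝[≠] 0) :=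
    tendsto_nhdsWithin_iff.mpr ⟨tendsto_const_nhds.div_atTop tendsto_id,
      eventually_ne_atTop 0 |>.mono fun x hx => div_ne_zero hc hx⟩
  have h := (hslope.comp hdiv).const_mul c
  simp only [Real.one_rpow, mul_one, smul_eq_mul, Function.comp_apply, inv_div] at h
  rw [mul_comm]
  refine h.congr' ?_
  filter_upwards [eventually_ne_atTop 0] with x hx
  field_simp

theorem log_ratio_limit (p : ℝ) :
    Filter.Tendsto
      (fun n : ℕ => Real.log n *
        (1 / 2 - (Real.log n) ^ p / (2 * (Real.log (2 * n)) ^ p)))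
      Filter.atTop (nhds (p * Real.log 2 / 2)) := by
  have hlog : Tendsto (fun n : ℕ => Real.log n) atTop atTop :=
    Real.tendsto_log_atTop.comp tendsto_natCast_atTop_atTop
  have h := ((tendsto_mul_one_add_div_rpow_sub_one (-p) (Real.log 2)).comp hlog).const_mul
    (-(1 / 2))
  rw [show -(1 / 2) * (-p * Real.log 2) = p * Real.log 2 / 2 by ring] at h
  refine h.congr' ?_
  filter_upwards [eventually_ge_atTop 2] with n hn
  have hL : 0 < Real.log n := Real.log_pos (by exact_mod_cast hn)
  have hlog2n : Real.log (2 * n) = Real.log n + Real.log 2 := by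
    rw [Real.log_mul two_ne_zero (by positivity), add_comm]
  have hratio : Real.log n ^ p / Real.log (2 * n) ^ p = (1 + Real.log 2 / Real.log n) ^ (-p) := by
    rw [hlog2n, ← Real.div_rpow hL.le (by positivity), Real.rpow_neg (by positivity),
      ← Real.inv_rpow (by positivity), one_add_div hL.ne', inv_div]
  simp only [Function.comp_apply, ← hratio]
  field_simp
  ring
end

section
/- Second Gauss' Test: Let (a_n) be a monotone decreasing sequence of positive reals with a_{2n}/a_n = 1/2 − β/ln(n) + γ(n)/(ln n)^p for all n ≥ 2, where p > 1, β constant, and γ bounded. If β > (ln 2)/2 then ∑ a_n converges, and if β ≤ (ln 2)/2 then ∑ a_n diverges. -/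
open Filter Topology Asymptotics Real

/-!
Cauchy condensation replaces `a` by `c k = 2 ^ k * a (2 ^ k)`, and the hypothesis turns into a
Gauss-type ratio `c (k + 1) / c k = 1 - r / k + O(k ^ (-p))` with `r = 2 β / log 2`.
Since `p > 1`, the error is `o(1 / (k log k))`. For `r > 1` the ratios are eventually below those
of `k ^ (-s)` with `1 < s < r`, so `c` is dominated by a convergent `p`-series; for `r ≤ 1` they are
eventually above those of `1 / (k log k)`, whose series diverges by condensation again.
-/

lemma Summable.of_ratio_le_ratio {c d : ℕ → ℝ} (hd : Summable d) (hc : ∀ᶠ k in atTop, 0 ≤ c k)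
    (hd_pos : ∀ᶠ k in atTop, 0 < d k)
    (hcd : ∀ᶠ k in atTop, c (k + 1) * d k ≤ c k * d (k + 1)) : Summable c := by
  obtain ⟨N, hN⟩ := eventually_atTop.mp (hc.and (hd_pos.and hcd))
  have hanti : AntitoneOn (fun k => c k / d k) {k | N ≤ k} := by
    refine antitoneOn_nat_Ici_of_succ_le fun k hk => ?_
    obtain ⟨-, hdk, hcdk⟩ := hN k hk
    rwa [div_le_div_iff₀ (hN (k + 1) (by omega)).2.1 hdk]
  refine summable_of_isBigO_nat hd (.of_bound (c N / d N) ?_)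
  filter_upwards [eventually_ge_atTop N] with k hk
  obtain ⟨hck, hdk, -⟩ := hN k hk
  rw [norm_of_nonneg hck, norm_of_nonneg hdk.le, ← div_le_iff₀ hdk]
  exact hanti (le_refl N) hk hk

lemma not_summable_inv_natCast_mul_log : ¬ Summable fun n : ℕ => ((n : ℝ) * log n)⁻¹ := by
  have hlog2 : 0 < log 2 := log_pos one_lt_two
  rw [← summable_condensed_iff_of_eventually_nonneg]
  · have hcond : (fun k : ℕ => (2 : ℝ) ^ k * (((2 ^ k : ℕ) : ℝ) * log ((2 ^ k : ℕ) : ℝ))⁻¹)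
        = fun k : ℕ => (log 2)⁻¹ * (k : ℝ)⁻¹ := by
      ext k
      push_cast
      rw [log_pow]
      field_simp
    rw [hcond, summable_mul_left_iff (inv_ne_zero hlog2.ne')]
    exact Real.not_summable_natCast_inv
  · exact .of_forall fun n => by have := Real.log_natCast_nonneg n; positivity
  · filter_upwards [eventually_ge_atTop 2] with n hn
    have hn' : (2 : ℝ) ≤ n := by exact_mod_cast hn
    have hlog : 0 < log n := log_pos (by linarith)
    push_cast
    gcongr <;> linarith

lemma one_sub_div_mul_rpow_add_one_le {x s : ℝ} (hx : 0 < x) (hs : 1 ≤ s) :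
    (1 - s / x) * (x + 1) ^ s ≤ x ^ s := by
  have hx1 : 0 < x + 1 := by linarith
  have bernoulli : 1 + s * (-1 / (x + 1)) ≤ (1 + -1 / (x + 1)) ^ s :=
    one_add_mul_self_le_rpow_one_add (by rw [neg_div, neg_le_neg_iff, div_le_one hx1]; linarith) hs
  rw [show 1 + -1 / (x + 1) = x / (x + 1) by field_simp; ring, div_rpow hx.le hx1.le] at bernoulli
  have hsx : s / (x + 1) ≤ s / x := div_le_div_of_nonneg_left (by linarith) hx (by linarith)
  calc (1 - s / x) * (x + 1) ^ s ≤ (1 + s * (-1 / (x + 1))) * (x + 1) ^ s := by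
        gcongr
        linarith [show s * (-1 / (x + 1)) = -(s / (x + 1)) by ring]
    _ ≤ x ^ s / (x + 1) ^ s * (x + 1) ^ s := by gcongr
    _ = x ^ s := div_mul_cancel₀ _ (rpow_pos_of_pos hx1 s).ne'

lemma sub_one_mul_log_sub_one_add_half_le {x : ℝ} (hx : 2 ≤ x) :
    (x - 1) * log (x - 1) + 1 / 2 ≤ (x - 1) * log x := by
  have hlog : 1 / x ≤ log x - log (x - 1) := by
    have := one_sub_inv_le_log_of_pos (show 0 < x / (x - 1) by apply div_pos <;> linarith)
    rwa [log_div (by linarith) (by linarith), inv_div, one_sub_div (by linarith),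
      sub_sub_cancel] at this
  have : 1 / 2 ≤ (x - 1) * (1 / x) := by rw [mul_one_div, le_div_iff₀ (by linarith)]; linarith
  nlinarith

lemma summable_of_ratio_le_one_sub_div {c : ℕ → ℝ} {s : ℝ} (hs : 1 < s) (hc : ∀ k, 0 < c k)
    (h : ∀ᶠ k : ℕ in atTop, c (k + 1) / c k ≤ 1 - s / k) : Summable c := by
  refine (Real.summable_nat_rpow_inv.2 hs).of_ratio_le_ratio (.of_forall fun k => (hc k).le)
    ?_ ?_
  · filter_upwards [eventually_gt_atTop 0] with k hk
    positivity
  · filter_upwards [h, eventually_gt_atTop 0] with k hk hk0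
    have hx : (0 : ℝ) < k := by exact_mod_cast hk0
    rw [div_le_iff₀ (hc k)] at hk
    push_cast
    rw [← div_eq_mul_inv, ← div_eq_mul_inv, div_le_div_iff₀ (by positivity) (by positivity)]
    calc c (k + 1) * (k + 1) ^ s ≤ c k * ((1 - s / k) * (k + 1) ^ s) := by
          rw [← mul_assoc, mul_comm (c k)]
          gcongr
      _ ≤ c k * k ^ s := by gcongr; exacts [(hc k).le, one_sub_div_mul_rpow_add_one_le hx hs.le]

lemma not_summable_of_ratio_ge_bertrand {c : ℕ → ℝ} (hc : ∀ k, 0 < c k)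
    (h : ∀ᶠ k : ℕ in atTop, 1 - 1 / k - 1 / (2 * (k * log k)) ≤ c (k + 1) / c k) :
    ¬ Summable c := by
  intro hsum
  -- `1 / (k log k)` shifted by one index, so that its ratios are those handled by
  -- `sub_one_mul_log_sub_one_add_half_le`
  set d : ℕ → ℝ := fun k => (((k : ℝ) - 1) * log ((k : ℝ) - 1))⁻¹ with hd
  suffices Summable d from not_summable_inv_natCast_mul_log <| by
    simpa [d] using (summable_nat_add_iff 1).2 this
  refine hsum.of_ratio_le_ratio ?_ (.of_forall hc) ?_
  · filter_upwards [eventually_ge_atTop 2] with k hk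
    have hk' : (1 : ℝ) ≤ k - 1 := by
      rw [le_sub_iff_add_le]
      exact_mod_cast hk
    have := log_nonneg hk'
    positivity
  · filter_upwards [h, eventually_ge_atTop 3] with k hk hk3
    have hx : (3 : ℝ) ≤ k := by exact_mod_cast hk3
    have hk1 : 0 < (k : ℝ) - 1 := by linarith
    have hlog : 0 < log ((k : ℝ) - 1) := log_pos (by linarith)
    have hlogk : 0 < log (k : ℝ) := log_pos (by linarith)
    rw [le_div_iff₀ (hc k)] at hk
    simp only [hd, Nat.cast_add, Nat.cast_one, add_sub_cancel_right]
    rw [← div_eq_inv_mul, ← div_eq_inv_mul, div_le_div_iff₀ (by positivity) (by positivity)]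
    have key := sub_one_mul_log_sub_one_add_half_le (show 2 ≤ (k : ℝ) by linarith)
    have hexp : (1 - 1 / k - 1 / (2 * (k * log k))) * (k * log k) = (k - 1) * log k - 1 / 2 := by
      field_simp
    calc c k * ((k - 1) * log (k - 1)) ≤ c k * ((k - 1) * log k - 1 / 2) := by
          gcongr ?_ * ?_
          · exact (hc k).le
          · linarith
      _ = (1 - 1 / k - 1 / (2 * (k * log k))) * c k * (k * log k) := by rw [← hexp]; ring
      _ ≤ c (k + 1) * (k * log k) := by gcongr

theorem summable_iff_one_lt_of_ratio_isLittleO {c : ℕ → ℝ} (hc : ∀ k, 0 < c k) {r : ℝ}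
    (h : (fun k : ℕ => c (k + 1) / c k - (1 - r / k)) =o[atTop] fun k => ((k : ℝ) * log k)⁻¹) :
    Summable c ↔ 1 < r := by
  have hlog : ∀ᶠ k : ℕ in atTop, 1 ≤ log k :=
    (tendsto_log_atTop.comp tendsto_natCast_atTop_atTop).eventually_ge_atTop 1
  constructor
  · intro hsum
    by_contra! hr
    refine not_summable_of_ratio_ge_bertrand hc ?_ hsum
    filter_upwards [h.def (by norm_num : (0 : ℝ) < 1 / 2), hlog, eventually_gt_atTop 0]
      with k hk hlogk hk0
    have hx : (0 : ℝ) < k := by exact_mod_cast hk0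
    have hrk : r / k ≤ 1 / k := by gcongr
    have hkl : 0 < (k : ℝ) * log k := by positivity
    simp only [Real.norm_eq_abs, abs_inv, abs_of_pos hkl] at hk
    have : 1 / (2 * (k * log k)) = 1 / 2 * (k * log k)⁻¹ := by ring
    linarith [(abs_le.1 hk).1]
  · intro hr
    refine summable_of_ratio_le_one_sub_div (s := (1 + r) / 2) (by linarith) hc ?_
    filter_upwards [h.def (show 0 < (r - 1) / 2 by linarith), hlog, eventually_gt_atTop 0]
      with k hk hlogk hk0
    have hx : (0 : ℝ) < k := by exact_mod_cast hk0
    have hkl : 0 < (k : ℝ) * log k := by positivity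
    simp only [Real.norm_eq_abs, abs_inv, abs_of_pos hkl] at hk
    have hinv : (k * log k)⁻¹ ≤ (k : ℝ)⁻¹ := by
      gcongr
      nlinarith
    have : (r - 1) / 2 * (k * log k)⁻¹ ≤ (r - 1) / 2 * (k : ℝ)⁻¹ := by gcongr
    have : 1 - (1 + r) / 2 / k = 1 - r / k + (r - 1) / 2 * (k : ℝ)⁻¹ := by
      field_simp
      ring
    linarith [(abs_le.1 hk).2]

lemma isLittleO_inv_rpow_inv_mul_log {p : ℝ} (hp : 1 < p) :
    (fun x : ℝ => (x ^ p)⁻¹) =o[atTop] fun x => (x * log x)⁻¹ := by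
  rw [isLittleO_iff_tendsto']
  · refine ((isLittleO_log_rpow_atTop (sub_pos.2 hp)).tendsto_div_nhds_zero).congr' ?_
    filter_upwards [eventually_gt_atTop 1] with x hx
    have hlog : 0 < log x := log_pos hx
    rw [rpow_sub_one (by linarith)]
    field_simp
  · filter_upwards [eventually_gt_atTop 1] with x hx h0
    have hlog : 0 < log x := log_pos hx
    exact absurd h0 (by positivity)

lemma condensed_ratio_sub_isBigO {a γ : ℕ → ℝ} {p β : ℝ} (ha : ∀ n, 0 < a n)
    (hγ : ∃ C, ∀ n, |γ n| ≤ C)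
    (hratio : ∀ n : ℕ, 2 ≤ n → a (2 * n) / a n = 1 / 2 - β / log n + γ n / log n ^ p) :
    (fun k : ℕ => 2 ^ (k + 1) * a (2 ^ (k + 1)) / (2 ^ k * a (2 ^ k)) - (1 - 2 * β / log 2 / k))
      =O[atTop] fun k => ((k : ℝ) ^ p)⁻¹ := by
  obtain ⟨C, hC⟩ := hγ
  have hlog2 : 0 < log 2 := log_pos one_lt_two
  refine .of_bound (2 * C / log 2 ^ p) ?_
  filter_upwards [eventually_ge_atTop 1] with k hk
  have hx : (0 : ℝ) < k := by exact_mod_cast hk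
  have h2k := hratio (2 ^ k) (by calc 2 = 2 ^ 1 := rfl
                                   _ ≤ 2 ^ k := Nat.pow_le_pow_right two_pos hk)
  push_cast at h2k
  rw [log_pow, mul_rpow hx.le hlog2.le] at h2k
  have hsplit : (2 : ℝ) ^ (k + 1) * a (2 ^ (k + 1)) / (2 ^ k * a (2 ^ k))
      = 2 * (a (2 * 2 ^ k) / a (2 ^ k)) := by
    rw [pow_succ, pow_succ, Nat.mul_comm (2 ^ k) 2]
    field_simp [(ha (2 ^ k)).ne']
  have hkp : 0 < (k : ℝ) ^ p := rpow_pos_of_pos hx p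
  have hlp : 0 < log 2 ^ p := rpow_pos_of_pos hlog2 p
  rw [hsplit, h2k, norm_inv, norm_of_nonneg hkp.le, Real.norm_eq_abs]
  have : 2 * (1 / 2 - β / (k * log 2) + γ (2 ^ k) / (k ^ p * log 2 ^ p)) - (1 - 2 * β / log 2 / k)
      = 2 * γ (2 ^ k) / log 2 ^ p * ((k : ℝ) ^ p)⁻¹ := by field_simp; ring
  rw [this, abs_mul, abs_div, abs_mul, abs_two, abs_of_pos hlp, abs_inv, abs_of_pos hkp]
  gcongr
  exact hC _

theorem second_gauss_test (a : ℕ → ℝ) (ha : ∀ n, 0 < a n)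
    (hmono : Antitone a) (p β : ℝ) (hp : 1 < p) (γ : ℕ → ℝ)
    (hγ : ∃ C : ℝ, ∀ n, |γ n| ≤ C)
    (hratio : ∀ n : ℕ, 2 ≤ n →
      a (2 * n) / a n = 1 / 2 - β / Real.log n + γ n / (Real.log n) ^ p) :
    Summable a ↔ Real.log 2 / 2 < β := by
  have herr := (condensed_ratio_sub_isBigO ha hγ hratio).trans_isLittleO
    ((isLittleO_inv_rpow_inv_mul_log hp).comp_tendsto tendsto_natCast_atTop_atTop)
  rw [← summable_condensed_iff_of_nonneg (fun n => (ha n).le) fun m n _ hmn => hmono hmn,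
    summable_iff_one_lt_of_ratio_isLittleO (fun k => mul_pos (pow_pos two_pos k) (ha _)) herr,
    one_lt_div (log_pos one_lt_two)]
  constructor <;> intro <;> linarith
end

section
/- Second Kummer's Test (divergence part): Let (a_n) be positive. If there is a sequence of positive reals (p_n) with ∑_k 1/(2^k · p_{2^k}) divergent, and for all sufficiently large n, p_n·(a_n/a_{2n}) − 2p_{2n} < 0, then ∑ a_n diverges. -/
/-! Put `b k = 2^k p(2^k) a(2^k)`. Applied at `n = 2^k`, the Kummer condition says exactly that
`b k < b (k + 1)` for large `k`, so `b` is eventually bounded below by some `b N > 0`. Hence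
`1 / (2^k p(2^k)) = a(2^k) / b k ≤ a(2^k) / b N` for `k ≥ N`, so `∑ 1 / (2^k p(2^k))` would
converge if `∑ a n`, and with it its subseries `∑ a(2^k)`, did. -/

open Filter Topology

lemma summable_one_div_of_monotoneOn_mul {u c : ℕ → ℝ} (hu : Summable u) (hc : ∀ k, 0 < c k)
    {N : ℕ} (hN : 0 < c N * u N) (hmono : MonotoneOn (fun k => c k * u k) (Set.Ici N)) :
    Summable fun k => 1 / c k := by
  refine (hu.div_const (c N * u N)).of_norm_bounded_eventually_nat ?_
  filter_upwards [eventually_ge_atTop N] with k hk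
  rw [Real.norm_of_nonneg (one_div_pos.2 (hc k)).le, div_le_div_iff₀ (hc k) hN, one_mul,
    mul_comm (u k)]
  exact hmono Set.self_mem_Ici hk hk

lemma mul_mul_lt_of_mul_div_lt {n x x' y y' : ℝ} (hn : 0 < n) (hy' : 0 < y')
    (h : x * (y / y') < 2 * x') : n * x * y < 2 * n * x' * y' := by
  rw [mul_div_assoc', div_lt_iff₀ hy'] at h
  nlinarith

theorem second_kummer_divergence (a p : ℕ → ℝ)
    (ha : ∀ n, 1 ≤ n → 0 < a n) (hp : ∀ n, 1 ≤ n → 0 < p n)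
    (hdiv : ¬ Summable (fun k : ℕ => 1 / (2 ^ k * p (2 ^ k))))
    (h : ∃ N : ℕ, ∀ n ≥ N, p n * (a n / a (2 * n)) < 2 * p (2 * n)) :
    ¬ Summable a := by
  intro hs
  obtain ⟨N, hN⟩ := h
  have hp2 (k : ℕ) : 0 < p (2 ^ k) := hp _ Nat.one_le_two_pow
  have ha2 (k : ℕ) : 0 < a (2 ^ k) := ha _ Nat.one_le_two_pow
  have hstep (k : ℕ) (hk : k ≥ N) :
      2 ^ k * p (2 ^ k) * a (2 ^ k) ≤ 2 ^ (k + 1) * p (2 ^ (k + 1)) * a (2 ^ (k + 1)) := by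
    have hkN : 2 ^ k ≥ N := (Nat.lt_two_pow_self.trans_le (Nat.pow_le_pow_right two_pos hk)).le
    have hlt := hN (2 ^ k) hkN
    rw [← pow_succ'] at hlt
    rw [pow_succ' (2 : ℝ)]
    exact (mul_mul_lt_of_mul_div_lt (pow_pos two_pos k) (ha2 (k + 1)) hlt).le
  exact hdiv <| summable_one_div_of_monotoneOn_mul
    (hs.comp_injective (Nat.pow_right_injective le_rfl)) (fun k => by have := hp2 k; positivity)
    (by have := hp2 N; have := ha2 N; positivity) (monotoneOn_nat_Ici_of_le_succ hstep)
end

section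
/- Let (a_n) be a sequence of positive reals. If for all sufficiently large n, a_{2n+1}/a_n > 1 + 1/(2n), then ∑ a_n diverges. -/
open Filter Topology

theorem corollary_2_1_4 (a : ℕ → ℝ) (ha : ∀ n, 1 ≤ n → 0 < a n)
    (h : ∃ N : ℕ, ∀ n ≥ N, a (2 * n + 1) / a n > 1 + 1 / (2 * (n : ℝ))) :
    ¬ Summable a := by
  obtain ⟨N, hN⟩ := h
  intro hs
  set M := max N 1 with hM
  -- iterated sequence
  let g : ℕ → ℕ := fun k => Nat.rec M (fun _ m => 2 * m + 1) k
  have hg0 : g 0 = M := rfl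
  have hgS : ∀ k, g (k + 1) = 2 * g k + 1 := fun k => rfl
  have hgM : ∀ k, M ≤ g k := by
    intro k
    induction k with
    | zero => simp [hg0]
    | succ k ih => rw [hgS]; omega
  have hg1 : ∀ k, 1 ≤ g k := fun k => le_trans (le_max_right N 1) (hgM k)
  have hgN : ∀ k, N ≤ g k := fun k => le_trans (le_max_left N 1) (hgM k)
  have hgrow : ∀ k, k ≤ g k := by
    intro k
    induction k with
    | zero => exact Nat.zero_le _
    | succ k ih => rw [hgS]; have := hg1 k; omega
  have key : ∀ k, a M ≤ a (g k) := by
    intro k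
    induction k with
    | zero => rw [hg0]
    | succ k ih =>
      have h1 := hN (g k) (hgN k)
      have hpos : 0 < a (g k) := ha _ (hg1 k)
      have h2 : ∀ m : ℕ, (1 : ℝ) ≤ 1 + 1 / (2 * (m : ℝ)) := by
        intro m
        have : (0:ℝ) ≤ 1 / (2 * (m : ℝ)) := by positivity
        linarith
      have h3 : 1 < a (2 * g k + 1) / a (g k) := lt_of_le_of_lt (h2 (g k)) h1
      rw [lt_div_iff₀ hpos, one_mul] at h3
      rw [hgS]
      linarith [ih]
  have hto : Tendsto g atTop atTop := tendsto_atTop_mono hgrow tendsto_id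
  have h0 : Tendsto (fun k => a (g k)) atTop (𝓝 0) :=
    (hs.tendsto_atTop_zero).comp hto
  have hMpos : 0 < a M := ha _ (le_max_right N 1)
  obtain ⟨k, hk⟩ := (h0.eventually (eventually_lt_nhds hMpos)).exists
  exact absurd (key k) (not_le.mpr hk)
end
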